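/- Define the 1-order (s,t)-Eulerian numbers by the recurrence ⟨n,k⟩_(s,t) = (k+s)·⟨n-1,k⟩_(s,t) + (n-k+t)·⟨n-1,k-1⟩_(s,t) + δ_{k,0}δ_{n,0}, with ⟨n,k⟩_(s,t) = 0 if n < 0 or k < 0. Then for all n ≥ 0 and 0 ≤ k ≤ n and nonnegative integers s,t: ⟨n,k⟩_(s,t) = Σ over permutations σ of {1,…,n+1} with exactly k descents of t^(lrmin(σ)-1) · s^(rlmin(σ)-1) (i.e. ⟨n,k⟩_(s,t) = A(k, n-k | t, s) = E_{n,k}(t,s,1)). -/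

import Mathlib

open Finset

def pval {n : ℕ} (σ : Equiv.Perm (Fin n)) (i : ℕ) : ℕ :=
  if h : i < n then (σ ⟨i, h⟩ : ℕ) else 0

def desSet {n : ℕ} (σ : Equiv.Perm (Fin n)) : Finset ℕ :=
  (Finset.range (n - 1)).filter (fun i => pval σ (i + 1) < pval σ i)

def des {n : ℕ} (σ : Equiv.Perm (Fin n)) : ℕ := (desSet σ).card

def maj {n : ℕ} (σ : Equiv.Perm (Fin n)) : ℕ := ∑ i ∈ desSet σ, (i + 1)

def lrmin {n : ℕ} (σ : Equiv.Perm (Fin n)) : ℕ :=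
  ((Finset.range n).filter (fun i => ∀ j ∈ Finset.range i, pval σ i < pval σ j)).card

def rlmin {n : ℕ} (σ : Equiv.Perm (Fin n)) : ℕ :=
  ((Finset.range n).filter
    (fun i => ∀ j ∈ Finset.range n, i < j → pval σ i < pval σ j)).card

def stE (s t : ℕ) : ℕ → ℕ → ℕ
  | 0, k => if k = 0 then 1 else 0
  | n + 1, 0 => s * stE s t n 0
  | n + 1, k + 1 => (k + 1 + s) * stE s t n (k + 1) + (n - k + t) * stE s t n k

/-!
Inserting the new largest letter into a permutation of `n + 1` letters at one of its `n + 2`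
slots is a bijection `S_{n+1} × Fin (n + 2) ≃ S_{n+2}`. In the first slot it creates a
left-to-right minimum and a descent, in the last slot a right-to-left minimum and no descent;
in an interior slot it changes neither kind of minimum and adds a descent exactly when the
slot is an ascent. So a permutation with `k` descents contributes `k + s` (descent slots and
the last one) to `k` descents and `n - k + t` (ascent slots and the first one) to `k + 1`
descents, which is the recurrence of `stE`.
-/

open Equiv

def natSuccAbove (p j : ℕ) : ℕ := if j < p then j else j + 1

section natSuccAbove

variable {p a b j : ℕ}

lemma natSuccAbove_lt_natSuccAbove_iff : natSuccAbove p a < natSuccAbove p b ↔ a < b := by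
  unfold natSuccAbove; split_ifs <;> omega

lemma natSuccAbove_injective (p : ℕ) : Function.Injective (natSuccAbove p) := by
  intro a b h; unfold natSuccAbove at h; split_ifs at h <;> omega

lemma natSuccAbove_ne (p j : ℕ) : natSuccAbove p j ≠ p := by
  unfold natSuccAbove; split_ifs <;> omega

lemma natSuccAbove_self (p : ℕ) : natSuccAbove p p = p + 1 := by
  simp [natSuccAbove]

lemma natSuccAbove_succ (h : j + 1 ≠ p) : natSuccAbove p (j + 1) = natSuccAbove p j + 1 := by
  unfold natSuccAbove; split_ifs <;> omega

lemma natSuccAbove_lt_succ_iff {m : ℕ} (hp : p ≤ m) : natSuccAbove p j < m + 1 ↔ j < m := by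
  unfold natSuccAbove; split_ifs <;> omega

lemma exists_natSuccAbove_eq {i : ℕ} (h : i ≠ p) : ∃ j, natSuccAbove p j = i := by
  rcases lt_or_gt_of_ne h with h | h
  · exact ⟨i, if_pos h⟩
  · exact ⟨i - 1, by unfold natSuccAbove; split_ifs <;> omega⟩

lemma forall_iff_natSuccAbove (R : ℕ → Prop) (p : ℕ) :
    (∀ i, R i) ↔ R p ∧ ∀ j, R (natSuccAbove p j) := by
  refine ⟨fun h => ⟨h p, fun j => h _⟩, fun ⟨hp, h⟩ i => ?_⟩
  obtain rfl | hi := eq_or_ne i p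
  · exact hp
  · obtain ⟨j, rfl⟩ := exists_natSuccAbove_eq hi
    exact h j

lemma card_filter_range_succ (Q : ℕ → Prop) [DecidablePred Q] {m : ℕ} (hp : p ≤ m) :
    #{i ∈ range (m + 1) | Q i} = #{j ∈ range m | Q (natSuccAbove p j)} + if Q p then 1 else 0 := by
  have hrange : range (m + 1) = insert p ((range m).map ⟨_, natSuccAbove_injective p⟩) := by
    ext i
    simp only [mem_range, mem_insert, mem_map, Function.Embedding.coeFn_mk]
    refine ⟨fun hi => ?_, ?_⟩
    · refine (eq_or_ne i p).imp id fun h => ?_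
      obtain ⟨j, rfl⟩ := exists_natSuccAbove_eq h
      exact ⟨j, (natSuccAbove_lt_succ_iff hp).1 hi, rfl⟩
    · rintro (rfl | ⟨j, hj, rfl⟩)
      · omega
      · exact (natSuccAbove_lt_succ_iff hp).2 hj
  rw [hrange, filter_insert, filter_map]
  split_ifs
  · rw [card_insert_of_notMem (by simp [natSuccAbove_ne]), card_map]; rfl
  · rw [card_map]; rfl

end natSuccAbove

lemma Fin.val_succAbove_eq_natSuccAbove {m : ℕ} (p : Fin (m + 1)) (j : Fin m) :
    (p.succAbove j : ℕ) = natSuccAbove p j := by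
  unfold Fin.succAbove natSuccAbove
  split_ifs <;> simp_all [Fin.lt_def]

section PermStatistics

variable {m : ℕ}

lemma pval_lt (σ : Perm (Fin (m + 1))) (i : ℕ) : pval σ i < m + 1 := by
  unfold pval; split_ifs
  exacts [(σ _).is_lt, m.succ_pos]

lemma one_le_lrmin (σ : Perm (Fin (m + 1))) : 1 ≤ lrmin σ :=
  card_pos.2 ⟨0, by simp⟩

lemma one_le_rlmin (σ : Perm (Fin (m + 1))) : 1 ≤ rlmin σ :=
  card_pos.2 ⟨m, by simp only [mem_filter, mem_range]; exact ⟨m.lt_succ_self, by omega⟩⟩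

lemma desSet_subset_range (σ : Perm (Fin (m + 1))) : desSet σ ⊆ range m := filter_subset _ _

lemma desSet_eq_filter_range (σ : Perm (Fin m)) :
    desSet σ = {i ∈ range m | i + 1 < m ∧ pval σ (i + 1) < pval σ i} := by
  ext i
  simp only [desSet, mem_filter, mem_range]
  omega

end PermStatistics

def minWeight (s t : ℕ) {m : ℕ} (σ : Perm (Fin m)) : ℕ := t ^ (lrmin σ - 1) * s ^ (rlmin σ - 1)

/-- The word of `τ` with the new largest letter `n + 1` inserted at position `p`. -/
def insertMax {n : ℕ} (τ : Perm (Fin (n + 1))) (p : Fin (n + 2)) : Perm (Fin (n + 2)) :=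
  (finSuccEquiv' p).trans (τ.optionCongr.trans (finSuccEquiv' (Fin.last (n + 1))).symm)

section insertMax

variable {n : ℕ} (τ : Perm (Fin (n + 1))) (p : Fin (n + 2))

@[simp]
lemma insertMax_apply_self : insertMax τ p p = Fin.last (n + 1) := by
  simp [insertMax, finSuccEquiv'_at, finSuccEquiv'_symm_none]

@[simp]
lemma insertMax_apply_succAbove (j : Fin (n + 1)) :
    insertMax τ p (p.succAbove j) = (τ j).castSucc := by
  simp [insertMax, finSuccEquiv'_succAbove, finSuccEquiv'_symm_some, Fin.succAbove_last]

lemma insertMax_bijective :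
    Function.Bijective fun x : Perm (Fin (n + 1)) × Fin (n + 2) => insertMax x.1 x.2 := by
  refine (Fintype.bijective_iff_injective_and_card _).2 ⟨?_, ?_⟩
  · rintro ⟨τ, p⟩ ⟨τ', p'⟩ h
    dsimp only at h
    obtain rfl : p = p' := (insertMax τ' p').injective <| by
      rw [insertMax_apply_self, ← h, insertMax_apply_self]
    obtain rfl : τ = τ' := Equiv.ext fun j => Fin.castSucc_injective _ <| by
      rw [← insertMax_apply_succAbove, h, insertMax_apply_succAbove]
    rfl
  · simp only [Fintype.card_prod, Fintype.card_perm, Fintype.card_fin, Nat.factorial_succ]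
    ring

lemma pval_insertMax_self : pval (insertMax τ p) p = n + 1 := by
  simp [pval]

lemma pval_insertMax_natSuccAbove (j : ℕ) :
    pval (insertMax τ p) (natSuccAbove p j) = pval τ j := by
  by_cases hj : j < n + 1
  · rw [← Fin.val_mk hj, ← Fin.val_succAbove_eq_natSuccAbove]
    simp only [pval, Fin.is_lt, dif_pos, Fin.eta, insertMax_apply_succAbove, Fin.val_castSucc, hj]
  · have : ¬ natSuccAbove p j < n + 2 := by
      unfold natSuccAbove; split_ifs <;> omega
    simp [pval, hj, this]

lemma pval_insertMax_add_one : pval (insertMax τ p) (p + 1) = pval τ p := by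
  rw [← natSuccAbove_self (p : ℕ), pval_insertMax_natSuccAbove]

lemma lrmin_insertMax : lrmin (insertMax τ p) = lrmin τ + if (p : ℕ) = 0 then 1 else 0 := by
  have hp : (p : ℕ) ≤ n + 1 := Nat.lt_succ_iff.mp p.is_lt
  unfold lrmin
  rw [card_filter_range_succ _ hp]
  congr 1
  · refine congrArg card (filter_congr fun a _ => ?_)
    simp only [mem_range, pval_insertMax_natSuccAbove]
    rw [forall_iff_natSuccAbove _ p]
    simp only [pval_insertMax_self, pval_insertMax_natSuccAbove, natSuccAbove_lt_natSuccAbove_iff,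
      pval_lt, implies_true, true_and]
  · congr 1
    simp only [mem_range, pval_insertMax_self, eq_iff_iff]
    refine ⟨fun h => Nat.eq_zero_of_not_pos fun hp0 => ?_, fun h j hj => by omega⟩
    exact (h 0 hp0).not_ge (Nat.lt_succ_iff.mp (pval_lt _ 0))

lemma rlmin_insertMax : rlmin (insertMax τ p) = rlmin τ + if (p : ℕ) = n + 1 then 1 else 0 := by
  have hp : (p : ℕ) ≤ n + 1 := Nat.lt_succ_iff.mp p.is_lt
  unfold rlmin
  rw [card_filter_range_succ _ hp]
  congr 1
  · refine congrArg card (filter_congr fun a _ => ?_)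
    simp only [mem_range, pval_insertMax_natSuccAbove]
    rw [forall_iff_natSuccAbove _ p]
    simp only [pval_insertMax_self, pval_insertMax_natSuccAbove, natSuccAbove_lt_natSuccAbove_iff,
      natSuccAbove_lt_succ_iff hp, pval_lt, implies_true, true_and]
  · congr 1
    simp only [mem_range, pval_insertMax_self, eq_iff_iff]
    refine ⟨fun h => ?_, fun h j hj hpj => by omega⟩
    by_contra hpn
    have := h (p + 1) (by omega) (by omega)
    rw [pval_insertMax_add_one] at this
    exact (pval_lt τ p).asymm this

lemma minWeight_insertMax (s t : ℕ) :
    minWeight s t (insertMax τ p) =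
      (if (p : ℕ) = 0 then t else 1) * (if (p : ℕ) = n + 1 then s else 1) * minWeight s t τ := by
  rw [minWeight, minWeight, lrmin_insertMax, rlmin_insertMax, Nat.sub_add_comm (one_le_lrmin τ),
    Nat.sub_add_comm (one_le_rlmin τ), pow_add, pow_add]
  split_ifs <;> ring

lemma des_insertMax :
    des (insertMax τ p) = #{j ∈ desSet τ | j + 1 ≠ (p : ℕ)} + if (p : ℕ) < n + 1 then 1 else 0 := by
  have hp : (p : ℕ) ≤ n + 1 := Nat.lt_succ_iff.mp p.is_lt
  rw [des, desSet_eq_filter_range, card_filter_range_succ _ hp, desSet_eq_filter_range, filter_filter]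
  congr 1
  · refine congrArg card (filter_congr fun a _ => ?_)
    rw [pval_insertMax_natSuccAbove]
    by_cases hap : a + 1 = p
    · have : natSuccAbove p a = a := if_pos (by omega)
      rw [this, hap, pval_insertMax_self]
      have := pval_lt τ a
      omega
    · rw [← natSuccAbove_succ hap, pval_insertMax_natSuccAbove, natSuccAbove_lt_succ_iff hp]
      tauto
  · simp only [pval_insertMax_add_one, pval_insertMax_self, pval_lt τ, and_true]
    split_ifs <;> omega

lemma des_insertMax_zero : des (insertMax τ 0) = des τ + 1 := by
  rw [des_insertMax]
  simp [des]

lemma des_insertMax_last : des (insertMax τ (Fin.last (n + 1))) = des τ := by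
  rw [des_insertMax, Fin.val_last, if_neg (lt_irrefl _), add_zero, filter_true_of_mem]
  · rfl
  · intro j hj
    have := mem_range.1 (desSet_subset_range τ hj)
    omega

lemma des_insertMax_castSucc_succ (q : Fin n) :
    des (insertMax τ q.castSucc.succ) = if (q : ℕ) ∈ desSet τ then des τ else des τ + 1 := by
  simp only [des_insertMax, Fin.val_succ, Fin.val_castSucc, ne_eq, add_left_inj, filter_ne',
    card_erase_eq_ite, add_lt_add_iff_right, q.is_lt, if_true]
  split_ifs with hq
  · have := card_pos.2 ⟨_, hq⟩
    rw [des]; omega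
  · rfl

end insertMax

lemma sum_fin_ite_mem {M : Type*} [AddCommMonoid M] {n : ℕ} {D : Finset ℕ} (hD : D ⊆ range n)
    (a b : M) : ∑ q : Fin n, (if (q : ℕ) ∈ D then a else b) = #D • a + (n - #D) • b := by
  rw [Fin.sum_univ_eq_sum_range (fun q => if q ∈ D then a else b), sum_ite, sum_const, sum_const,
    filter_mem_eq_inter, inter_eq_right.2 hD, filter_not, filter_mem_eq_inter,
    inter_eq_right.2 hD, card_sdiff_of_subset hD, card_range]

lemma sum_insertMax (s t k : ℕ) {n : ℕ} (τ : Perm (Fin (n + 1))) :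
    ∑ p, (if des (insertMax τ p) = k then minWeight s t (insertMax τ p) else 0) =
      (if des τ = k then (k + s) * minWeight s t τ else 0) +
        if des τ + 1 = k then (n + 1 - k + t) * minWeight s t τ else 0 := by
  have hmid : ∀ q : Fin n, (if des (insertMax τ q.castSucc.succ) = k then
        minWeight s t (insertMax τ q.castSucc.succ) else 0) =
      if (q : ℕ) ∈ desSet τ then (if des τ = k then minWeight s t τ else 0)
        else if des τ + 1 = k then minWeight s t τ else 0 := by
    intro q
    rw [des_insertMax_castSucc_succ, minWeight_insertMax]
    simp only [Fin.val_succ, Fin.val_castSucc, add_eq_zero, one_ne_zero, and_false, if_false,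
      add_left_inj, q.is_lt.ne, one_mul]
    split_ifs <;> rfl
  rw [Fin.sum_univ_succ, Fin.sum_univ_castSucc, Fin.succ_last, des_insertMax_zero,
    des_insertMax_last, minWeight_insertMax, minWeight_insertMax, sum_congr rfl fun q _ => hmid q,
    sum_fin_ite_mem (desSet_subset_range τ)]
  simp only [Fin.val_zero, Fin.val_last, if_true, Nat.zero_ne_add_one, if_false,
    Nat.succ_ne_zero, mul_one, one_mul, smul_eq_mul, show #(desSet τ) = des τ from rfl]
  split_ifs <;> (try omega) <;> subst_vars <;> (try rw [Nat.add_sub_add_right]) <;> ring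

def carlitzScoville (s t n k : ℕ) : ℕ :=
  ∑ σ ∈ (univ : Finset (Perm (Fin (n + 1)))).filter (fun σ => des σ = k), minWeight s t σ

lemma carlitzScoville_zero (s t k : ℕ) : carlitzScoville s t 0 k = if k = 0 then 1 else 0 := by
  have hd : des (1 : Perm (Fin 1)) = 0 := by decide
  have hl : lrmin (1 : Perm (Fin 1)) = 1 := by decide
  have hr : rlmin (1 : Perm (Fin 1)) = 1 := by decide
  show ∑ σ ∈ (univ : Finset (Perm (Fin 1))).filter (des · = k), minWeight s t σ = _
  rw [sum_filter, Fintype.sum_subsingleton _ 1, hd, minWeight, hl, hr]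
  simp [eq_comm]

lemma carlitzScoville_succ (s t n k : ℕ) :
    carlitzScoville s t (n + 1) k =
      (k + s) * carlitzScoville s t n k +
        (n + 1 - k + t) * ∑ τ ∈ (univ : Finset (Perm (Fin (n + 1)))).filter (des · + 1 = k),
          minWeight s t τ := by
  rw [carlitzScoville, sum_filter, ← insertMax_bijective.sum_comp, Fintype.sum_prod_type]
  simp only [sum_insertMax, sum_add_distrib, carlitzScoville, sum_filter, mul_sum]
  congr 1 <;> refine sum_congr rfl fun τ _ => ?_ <;> split_ifs <;> simp

lemma carlitzScoville_succ_zero (s t n : ℕ) :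
    carlitzScoville s t (n + 1) 0 = s * carlitzScoville s t n 0 := by
  simp [carlitzScoville_succ]

lemma carlitzScoville_succ_succ (s t n k : ℕ) :
    carlitzScoville s t (n + 1) (k + 1) =
      (k + 1 + s) * carlitzScoville s t n (k + 1) + (n - k + t) * carlitzScoville s t n k := by
  simp only [carlitzScoville_succ, Nat.add_sub_add_right, add_left_inj]
  rfl

theorem stE_eq_carlitz_scoville_general (s t n k : ℕ) :
    stE s t n k =
      ∑ σ ∈ (Finset.univ : Finset (Equiv.Perm (Fin (n + 1)))).filter (fun σ => des σ = k),
        t ^ (lrmin σ - 1) * s ^ (rlmin σ - 1) := by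
  change stE s t n k = carlitzScoville s t n k
  induction n generalizing k with
  | zero => rw [stE, carlitzScoville_zero]
  | succ n ih =>
    cases k with
    | zero => rw [stE, carlitzScoville_succ_zero, ih]
    | succ k => rw [stE, carlitzScoville_succ_succ, ih, ih]

theorem stE_eq_carlitz_scoville (s t n k : ℕ) (hk : k ≤ n) :
    stE s t n k =
      ∑ σ ∈ (Finset.univ : Finset (Equiv.Perm (Fin (n + 1)))).filter (fun σ => des σ = k),
        t ^ (lrmin σ - 1) * s ^ (rlmin σ - 1) :=
  stE_eq_carlitz_scoville_general s t n k
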